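/- Let A be an epsilon-strongly G-graded ring, R = A_1, and let E = {e_1, …, e_n} be pairwise orthogonal primitive idempotents of R such that Re_i and Re_j are non-isomorphic as left R-modules whenever i ≠ j, and such that every nonzero indecomposable finitely generated projective left R-module is isomorphic to some Re_i. Then G_E := {g ∈ G : for every e ∈ E there exists f ∈ E with A_g e ≅ Rf as left R-modules} = {g ∈ G : ε_g e_i = e_i for all 1 ≤ i ≤ n} = {g ∈ G : ε_g e_i ≠ 0 for all 1 ≤ i ≤ n}; here A_g e = {a e : a ∈ A_g}, a left R-submodule of A. -/

import Mathlib

set_option maxHeartbeats 1000000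
set_option synthInstance.maxHeartbeats 400000
set_option linter.unusedVariables false
set_option linter.dupNamespace false



/-- A `G`-grading on a unital ring `A`: a family of additive subgroups with
`A_g A_h ⊆ A_{gh}`, `1 ∈ A₁`, whose internal direct sum is `A`. -/
structure RingGrading (G : Type*) [Group G] [DecidableEq G]
    (A : Type*) [Ring A] where
  comp : G → AddSubgroup A
  one_mem : (1 : A) ∈ comp 1
  mul_mem : ∀ ⦃g h : G⦄ ⦃a b : A⦄, a ∈ comp g → b ∈ comp h → a * b ∈ comp (g * h)
  isInternal : DirectSum.IsInternal comp

variable {G : Type*} [Group G] [DecidableEq G] {A : Type*} [Ring A]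

/-- The additive subgroup `S T` generated by products of elements of `S` and `T`. -/
def sgMul (S T : AddSubgroup A) : AddSubgroup A :=
  AddSubgroup.closure {x : A | ∃ s ∈ S, ∃ t ∈ T, x = s * t}

/-- `ε` is a family of epsilon-elements for the grading `𝒜`:
`ε_g ∈ A_g A_{g⁻¹}` and `ε_g a = a = a ε_{g⁻¹}` for all `a ∈ A_g`. -/
structure IsEpsilonFamily (𝒜 : RingGrading G A) (ε : G → A) : Prop where
  mem : ∀ g : G, ε g ∈ sgMul (𝒜.comp g) (𝒜.comp g⁻¹)
  mul_left : ∀ g : G, ∀ a ∈ 𝒜.comp g, ε g * a = a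
  mul_right : ∀ g : G, ∀ a ∈ 𝒜.comp g, a * ε g⁻¹ = a

/-- `𝒜` is an epsilon-strongly graded ring. -/
def IsEpsilonStrong (𝒜 : RingGrading G A) : Prop :=
  ∃ ε : G → A, IsEpsilonFamily 𝒜 ε

/-- The base ring `R = A₁` as a subring of `A`. -/
def RingGrading.base (𝒜 : RingGrading G A) : Subring A where
  carrier := 𝒜.comp 1
  zero_mem' := zero_mem _
  one_mem' := 𝒜.one_mem
  add_mem' := fun ha hb => add_mem ha hb
  neg_mem' := fun ha => neg_mem ha
  mul_mem' := fun ha hb => by simpa using 𝒜.mul_mem ha hb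

/-- `A_g x = {a x : a ∈ A_g}` as a left `R`-submodule of `A`, where `R = A₁`.
In particular `compMul 𝒜 1 x = R x`. -/
def RingGrading.compMul (𝒜 : RingGrading G A) (g : G) (x : A) :
    Submodule ↥𝒜.base A where
  carrier := {y : A | ∃ a ∈ 𝒜.comp g, y = a * x}
  zero_mem' := ⟨0, zero_mem _, (zero_mul x).symm⟩
  add_mem' := by
    rintro a b ⟨r, hr, rfl⟩ ⟨s, hs, rfl⟩
    exact ⟨r + s, add_mem hr hs, (add_mul r s x).symm⟩
  smul_mem' := by
    rintro c y ⟨r, hr, rfl⟩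
    exact ⟨(c : A) * r, by simpa using 𝒜.mul_mem c.2 hr, (mul_assoc (c : A) r x).symm⟩

/-- A primitive idempotent of a ring: a nonzero idempotent which is not the sum of
two nonzero orthogonal idempotents. -/
def IsPrimitiveIdempotent {S : Type*} [Ring S] (e : S) : Prop :=
  IsIdempotentElem e ∧ e ≠ 0 ∧
    ¬∃ a b : S, IsIdempotentElem a ∧ IsIdempotentElem b ∧ a ≠ 0 ∧ b ≠ 0 ∧
      a * b = 0 ∧ b * a = 0 ∧ e = a + b

universe u

namespace GEaux

variable {𝒜 : RingGrading G A} {ε : G → A}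

lemma mem_base_iff {x : A} : x ∈ 𝒜.base ↔ x ∈ 𝒜.comp 1 := Iff.rfl

lemma coe_smul_sub {N : Submodule ↥𝒜.base A} (r : ↥𝒜.base) (z : N) :
    ((r • z : ↥N) : A) = (r : A) * z := rfl

/-- finite representation of elements of `sgMul`. -/
lemma sgMul_rep {S T : AddSubgroup A} {x : A} (hx : x ∈ sgMul S T) :
    ∃ (m : ℕ) (c d : Fin m → A), (∀ k, c k ∈ S) ∧ (∀ k, d k ∈ T) ∧
      ∑ k, c k * d k = x := by
  induction hx using AddSubgroup.closure_induction with
  | mem x hx =>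
    obtain ⟨s, hs, t, ht, rfl⟩ := hx
    exact ⟨1, fun _ => s, fun _ => t, fun _ => hs, fun _ => ht, by simp⟩
  | zero => exact ⟨0, Fin.elim0, Fin.elim0, fun k => k.elim0, fun k => k.elim0, by simp⟩
  | add x y hx hy ihx ihy =>
    obtain ⟨m₁, c₁, d₁, hc₁, hd₁, hs₁⟩ := ihx
    obtain ⟨m₂, c₂, d₂, hc₂, hd₂, hs₂⟩ := ihy
    refine ⟨m₁ + m₂, Fin.append c₁ c₂, Fin.append d₁ d₂, ?_, ?_, ?_⟩
    · intro k
      induction k using Fin.addCases with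
      | left k => simpa [Fin.append_left] using hc₁ k
      | right k => simpa [Fin.append_right] using hc₂ k
    · intro k
      induction k using Fin.addCases with
      | left k => simpa [Fin.append_left] using hd₁ k
      | right k => simpa [Fin.append_right] using hd₂ k
    · rw [Fin.sum_univ_add]
      simp only [Fin.append_left, Fin.append_right]
      rw [hs₁, hs₂]
  | neg x hx ih =>
    obtain ⟨m, c, d, hc, hd, hs⟩ := ih
    exact ⟨m, fun k => -(c k), d, fun k => neg_mem (hc k), hd, by
      simp only [neg_mul]
      rw [Finset.sum_neg_distrib, hs]⟩

lemma eps_mem_one (hε : IsEpsilonFamily 𝒜 ε) (g : G) : ε g ∈ 𝒜.comp 1 := by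
  obtain ⟨m, c, d, hc, hd, hs⟩ := sgMul_rep (hε.mem g)
  rw [← hs]
  exact sum_mem fun k _ => by simpa using 𝒜.mul_mem (hc k) (hd k)

lemma sg_left_id (hε : IsEpsilonFamily 𝒜 ε) (g : G) {x : A}
    (hx : x ∈ sgMul (𝒜.comp g) (𝒜.comp g⁻¹)) : ε g * x = x := by
  obtain ⟨m, c, d, hc, hd, hs⟩ := sgMul_rep hx
  have h1 : ∀ k, ε g * (c k * d k) = c k * d k := fun k => by
    rw [← mul_assoc, hε.mul_left g (c k) (hc k)]
  calc ε g * x = ∑ k, ε g * (c k * d k) := by rw [← hs, Finset.mul_sum]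
  _ = x := by rw [Finset.sum_congr rfl fun k _ => h1 k, hs]

lemma sg_right_id (hε : IsEpsilonFamily 𝒜 ε) (g : G) {x : A}
    (hx : x ∈ sgMul (𝒜.comp g) (𝒜.comp g⁻¹)) : x * ε g = x := by
  obtain ⟨m, c, d, hc, hd, hs⟩ := sgMul_rep hx
  have h1 : ∀ k, (c k * d k) * ε g = c k * d k := fun k => by
    have := hε.mul_right g⁻¹ (d k) (hd k)
    rw [inv_inv] at this
    rw [mul_assoc, this]
  calc x * ε g = ∑ k, (c k * d k) * ε g := by rw [← hs, Finset.sum_mul]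
  _ = x := by rw [Finset.sum_congr rfl fun k _ => h1 k, hs]

lemma eps_idem (hε : IsEpsilonFamily 𝒜 ε) (g : G) : ε g * ε g = ε g :=
  sg_left_id hε g (hε.mem g)

lemma eps_comm (hε : IsEpsilonFamily 𝒜 ε) (g : G) {r : A} (hr : r ∈ 𝒜.comp 1) :
    ε g * r = r * ε g := by
  have hmr : ε g * r ∈ sgMul (𝒜.comp g) (𝒜.comp g⁻¹) := by
    obtain ⟨m, c, d, hc, hd, hs⟩ := sgMul_rep (hε.mem g)
    rw [← hs, Finset.sum_mul]
    refine sum_mem fun k _ => ?_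
    rw [mul_assoc]
    exact AddSubgroup.subset_closure
      ⟨c k, hc k, d k * r, by simpa using 𝒜.mul_mem (hd k) hr, rfl⟩
  have hml : r * ε g ∈ sgMul (𝒜.comp g) (𝒜.comp g⁻¹) := by
    obtain ⟨m, c, d, hc, hd, hs⟩ := sgMul_rep (hε.mem g)
    rw [← hs, Finset.mul_sum]
    refine sum_mem fun k _ => ?_
    rw [← mul_assoc]
    exact AddSubgroup.subset_closure
      ⟨r * c k, by simpa using 𝒜.mul_mem hr (hc k), d k, hd k, rfl⟩
  have h1 : (ε g * r) * ε g = ε g * r := sg_right_id hε g hmr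
  have h2 : ε g * (r * ε g) = r * ε g := sg_left_id hε g hml
  rw [← h1, mul_assoc, h2]

lemma eps_dichotomy (hε : IsEpsilonFamily 𝒜 ε) (g : G) {x : ↥𝒜.base}
    (hx : IsPrimitiveIdempotent x) :
    ε g * (x : A) = x ∨ ε g * (x : A) = 0 := by
  by_cases h0 : ε g * (x : A) = 0
  · exact Or.inr h0
  left
  have hxc : (x : A) ∈ 𝒜.comp 1 := x.2
  have hcomm : ε g * (x : A) = (x : A) * ε g := eps_comm hε g hxc
  have hee : ε g * ε g = ε g := eps_idem hε g
  have hxx : (x : A) * x = x := congrArg Subtype.val hx.1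
  set εR : ↥𝒜.base := ⟨ε g, eps_mem_one hε g⟩ with hεR
  set a : ↥𝒜.base := εR * x with ha
  have haA : (a : A) = ε g * x := rfl
  have k1 : (x : A) * (ε g * x) = ε g * x := by
    rw [← mul_assoc, ← hcomm, mul_assoc, hxx]
  have k2 : (ε g * (x:A)) * x = ε g * x := by rw [mul_assoc, hxx]
  have haa : a * a = a := by
    apply Subtype.ext
    show (ε g * (x:A)) * (ε g * x) = ε g * x
    rw [mul_assoc, k1, ← mul_assoc, hee]
  have hxa : x * a = a := Subtype.ext k1
  have hax : a * x = a := Subtype.ext k2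
  by_cases hb0 : x - a = 0
  · have : x = a := by rwa [sub_eq_zero] at hb0
    exact (congrArg Subtype.val this).symm
  have ha0 : a ≠ 0 := fun hh => h0 (by rw [← haA, hh]; rfl)
  exfalso
  apply hx.2.2
  refine ⟨a, x - a, haa, ?_, ha0, hb0, ?_, ?_, by abel⟩
  · show (x - a) * (x - a) = x - a
    rw [sub_mul, mul_sub, mul_sub, hx.1.eq, hxa, hax, haa]
    abel
  · show a * (x - a) = 0
    rw [mul_sub, hax, haa, sub_self]
  · show (x - a) * a = 0
    rw [sub_mul, hxa, haa, sub_self]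

end GEaux

namespace GEaux

variable {𝒜 : RingGrading G A} {ε : G → A}

lemma compMul_sub_comp {g : G} {w : A} (hw : w ∈ 𝒜.comp 1) {y : A}
    (hy : y ∈ 𝒜.compMul g w) : y ∈ 𝒜.comp g := by
  obtain ⟨a, ha, rfl⟩ := hy
  simpa using 𝒜.mul_mem ha hw

lemma compMul_mul_w {g : G} {w : A} (hww : w * w = w) {y : A}
    (hy : y ∈ 𝒜.compMul g w) : y * w = y := by
  obtain ⟨a, ha, rfl⟩ := hy
  rw [mul_assoc, hww]

lemma rep_eq (hε : IsEpsilonFamily 𝒜 ε) (g : G) {m : ℕ} {c d : Fin m → A}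
    (hs : ∑ k, c k * d k = ε g⁻¹) {w : A} (hw : w ∈ 𝒜.comp 1) (hww : w * w = w)
    {y : A} (hy : y ∈ 𝒜.compMul g w) :
    ∑ k, (y * c k) * (d k * w) = y := by
  have h1 : ∀ k, (y * c k) * (d k * w) = (y * (c k * d k)) * w := fun k => by
    simp [mul_assoc]
  rw [Finset.sum_congr rfl fun k _ => h1 k, ← Finset.sum_mul, ← Finset.mul_sum, hs,
    hε.mul_right g y (compMul_sub_comp hw hy), compMul_mul_w hww hy]

/-- key fact: right multiplication by `∑ cₖ · p(dₖ w)` implements `p`. -/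
lemma tmap_spec (hε : IsEpsilonFamily 𝒜 ε) (g : G) {m : ℕ} {c d : Fin m → A}
    (hc : ∀ k, c k ∈ 𝒜.comp g⁻¹) (hd : ∀ k, d k ∈ 𝒜.comp g)
    (hs : ∑ k, c k * d k = ε g⁻¹) {w : A} (hw : w ∈ 𝒜.comp 1) (hww : w * w = w)
    {N : Submodule ↥𝒜.base A} (p : ↥(𝒜.compMul g w) →ₗ[↥𝒜.base] ↥N)
    {y : A} (hy : y ∈ 𝒜.compMul g w) :
    y * (∑ k, c k * (p ⟨d k * w, ⟨d k, hd k, rfl⟩⟩ : A)) = (p ⟨y, hy⟩ : A) := by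
  have hmem : ∀ k, y * c k ∈ 𝒜.base := fun k =>
    mem_base_iff.mpr (by simpa using 𝒜.mul_mem (compMul_sub_comp hw hy) (hc k))
  have key : (⟨y, hy⟩ : ↥(𝒜.compMul g w)) =
      ∑ k, (⟨y * c k, hmem k⟩ : ↥𝒜.base) • ⟨d k * w, ⟨d k, hd k, rfl⟩⟩ := by
    apply Subtype.ext
    rw [AddSubmonoidClass.coe_finset_sum]
    simp only [coe_smul_sub]
    exact (rep_eq hε g hs hw hww hy).symm
  have h2 : (p ⟨y, hy⟩ : A) =
      ∑ k, ((⟨y * c k, hmem k⟩ : ↥𝒜.base) • (p ⟨d k * w, ⟨d k, hd k, rfl⟩⟩) : A) := by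
    rw [key, map_sum, AddSubmonoidClass.coe_finset_sum]
    exact Finset.sum_congr rfl fun k _ => by rw [map_smul]; rfl
  rw [h2, Finset.mul_sum]
  exact Finset.sum_congr rfl fun k _ => by rw [← mul_assoc]; rfl

noncomputable def piToSub (𝒜 : RingGrading G A) (g : G) {m : ℕ} (d : Fin m → A)
    (hd : ∀ k, d k ∈ 𝒜.comp g) (w : A) :
    (Fin m → ↥𝒜.base) →ₗ[↥𝒜.base] ↥(𝒜.compMul g w) where
  toFun f := ∑ k, f k • (⟨d k * w, ⟨d k, hd k, rfl⟩⟩ : ↥(𝒜.compMul g w))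
  map_add' f f' := by simp [add_smul, Finset.sum_add_distrib]
  map_smul' r f := by simp [Finset.smul_sum, mul_smul]

noncomputable def subToPi (𝒜 : RingGrading G A) (g : G) {m : ℕ} (c : Fin m → A)
    (hc : ∀ k, c k ∈ 𝒜.comp g⁻¹) {w : A} (hw : w ∈ 𝒜.comp 1) :
    ↥(𝒜.compMul g w) →ₗ[↥𝒜.base] (Fin m → ↥𝒜.base) where
  toFun y := fun k => ⟨(y : A) * c k,
    mem_base_iff.mpr (by simpa using 𝒜.mul_mem (compMul_sub_comp hw y.2) (hc k))⟩
  map_add' y y' := by funext k; apply Subtype.ext; simp [add_mul]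
  map_smul' r y := by
    funext k
    apply Subtype.ext
    show ((r • y : ↥(𝒜.compMul g w)) : A) * c k = (r : A) * ((y : A) * c k)
    rw [coe_smul_sub, mul_assoc]

lemma split_eq (hε : IsEpsilonFamily 𝒜 ε) (g : G) {m : ℕ} {c d : Fin m → A}
    (hc : ∀ k, c k ∈ 𝒜.comp g⁻¹) (hd : ∀ k, d k ∈ 𝒜.comp g)
    (hs : ∑ k, c k * d k = ε g⁻¹) {w : A} (hw : w ∈ 𝒜.comp 1) (hww : w * w = w) :
    (piToSub 𝒜 g d hd w).comp (subToPi 𝒜 g c hc hw) = LinearMap.id := by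
  ext y
  simp only [LinearMap.comp_apply, LinearMap.id_apply, piToSub, subToPi, LinearMap.coe_mk,
    AddHom.coe_mk]
  rw [AddSubmonoidClass.coe_finset_sum]
  simp only [coe_smul_sub]
  exact rep_eq hε g hs hw hww y.2

lemma compMul_finite (hε : IsEpsilonFamily 𝒜 ε) (g : G) {m : ℕ} {c d : Fin m → A}
    (hc : ∀ k, c k ∈ 𝒜.comp g⁻¹) (hd : ∀ k, d k ∈ 𝒜.comp g)
    (hs : ∑ k, c k * d k = ε g⁻¹) {w : A} (hw : w ∈ 𝒜.comp 1) (hww : w * w = w) :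
    Module.Finite ↥𝒜.base ↥(𝒜.compMul g w) := by
  refine Module.Finite.of_surjective (piToSub 𝒜 g d hd w) fun y => ⟨subToPi 𝒜 g c hc hw y, ?_⟩
  rw [← LinearMap.comp_apply, split_eq hε g hc hd hs hw hww, LinearMap.id_apply]

lemma compMul_projective (hε : IsEpsilonFamily 𝒜 ε) (g : G) {m : ℕ} {c d : Fin m → A}
    (hc : ∀ k, c k ∈ 𝒜.comp g⁻¹) (hd : ∀ k, d k ∈ 𝒜.comp g)
    (hs : ∑ k, c k * d k = ε g⁻¹) {w : A} (hw : w ∈ 𝒜.comp 1) (hww : w * w = w) :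
    Module.Projective ↥𝒜.base ↥(𝒜.compMul g w) :=
  Module.Projective.of_split (subToPi 𝒜 g c hc hw) (piToSub 𝒜 g d hd w)
    (split_eq hε g hc hd hs hw hww)

lemma compMul_nontrivial (g : G) {m : ℕ} {c d : Fin m → A}
    (hd : ∀ k, d k ∈ 𝒜.comp g)
    (hs : ∑ k, c k * d k = ε g⁻¹) {w : A}
    (H : ε g⁻¹ * w = w) (hw0 : w ≠ 0) :
    Nontrivial ↥(𝒜.compMul g w) := by
  have hex : ∃ k, d k * w ≠ 0 := by
    by_contra h
    push_neg at h
    apply hw0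
    have h2 : w = ∑ k, c k * (d k * w) := by
      rw [Finset.sum_congr rfl fun k (_ : k ∈ Finset.univ) => (mul_assoc (c k) (d k) w).symm,
        ← Finset.sum_mul, hs, H]
    rw [h2]
    simp [h]
  obtain ⟨k, hk⟩ := hex
  refine ⟨⟨d k * w, ⟨d k, hd k, rfl⟩⟩, 0, ?_⟩
  simp only [ne_eq, Subtype.ext_iff, ZeroMemClass.coe_zero]
  exact hk

end GEaux

namespace GEaux

variable {𝒜 : RingGrading G A} {ε : G → A}

lemma compMul_indec (hε : IsEpsilonFamily 𝒜 ε) (g : G) {m : ℕ} {c d : Fin m → A}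
    (hc : ∀ k, c k ∈ 𝒜.comp g⁻¹) (hd : ∀ k, d k ∈ 𝒜.comp g)
    (hs : ∑ k, c k * d k = ε g⁻¹) {x : ↥𝒜.base} (hx : IsPrimitiveIdempotent x)
    (W W' : Submodule ↥𝒜.base ↥(𝒜.compMul g (x : A))) (hWW : IsCompl W W') :
    W = ⊥ ∨ W' = ⊥ := by
  have hw : (x : A) ∈ 𝒜.comp 1 := x.2
  have hww : (x : A) * x = x := congrArg Subtype.val hx.1
  set proj := W.linearProjOfIsCompl W' hWW with hproj
  set p : ↥(𝒜.compMul g (x : A)) →ₗ[↥𝒜.base] ↥(𝒜.compMul g (x : A)) :=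
    W.subtype.comp proj with hp
  set t : A := ∑ k, c k * (p ⟨d k * (x : A), ⟨d k, hd k, rfl⟩⟩ : A) with ht
  have hF1 : ∀ (y : A) (hy : y ∈ 𝒜.compMul g (x : A)), y * t = (p ⟨y, hy⟩ : A) :=
    fun y hy => tmap_spec hε g hc hd hs hw hww p hy
  have hpW : ∀ z : ↥(𝒜.compMul g (x : A)), z ∈ W → p z = z := by
    intro z hz
    have : proj z = ⟨z, hz⟩ := Submodule.linearProjOfIsCompl_apply_left hWW ⟨z, hz⟩
    rw [hp, LinearMap.comp_apply, this, Submodule.subtype_apply]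
  have hpW' : ∀ z : ↥(𝒜.compMul g (x : A)), z ∈ W' → p z = 0 := by
    intro z hz
    have : proj z = 0 := Submodule.linearProjOfIsCompl_apply_right hWW ⟨z, hz⟩
    rw [hp, LinearMap.comp_apply, this, map_zero]
  have htcomp : t ∈ 𝒜.comp 1 := by
    rw [ht]
    refine sum_mem fun k _ => ?_
    have h2 : (p ⟨d k * (x : A), ⟨d k, hd k, rfl⟩⟩ : A) ∈ 𝒜.comp g :=
      compMul_sub_comp hw (p _).2
    simpa using 𝒜.mul_mem (hc k) h2
  have htx : t * (x : A) = t := by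
    rw [ht, Finset.sum_mul]
    refine Finset.sum_congr rfl fun k _ => ?_
    rw [mul_assoc, compMul_mul_w hww (p _).2]
  -- the idempotent x * t
  set τ : ↥𝒜.base := ⟨t, htcomp⟩ with hτ
  set aR : ↥𝒜.base := x * τ with haR
  have haA : (aR : A) = (x : A) * t := rfl
  have hax : aR * x = aR := by
    apply Subtype.ext
    show ((x : A) * t) * x = (x : A) * t
    rw [mul_assoc, htx]
  have hxa : x * aR = aR := by
    apply Subtype.ext
    show (x : A) * ((x : A) * t) = (x : A) * t
    rw [← mul_assoc, hww]
  have htt : t * t = t := by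
    conv_lhs => rw [ht, Finset.sum_mul]
    rw [ht]
    refine Finset.sum_congr rfl fun k _ => ?_
    rw [mul_assoc]
    have h3 := hF1 _ (p ⟨d k * (x : A), ⟨d k, hd k, rfl⟩⟩).2
    rw [Subtype.coe_eta] at h3
    rw [h3]
    congr 1
    have h4 : p (p ⟨d k * (x : A), ⟨d k, hd k, rfl⟩⟩) = p ⟨d k * (x : A), ⟨d k, hd k, rfl⟩⟩ := by
      apply hpW
      rw [hp, LinearMap.comp_apply, Submodule.subtype_apply]
      exact (proj _).2
    exact congrArg Subtype.val h4
  have haa : aR * aR = aR := by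
    apply Subtype.ext
    show ((x : A) * t) * ((x : A) * t) = (x : A) * t
    rw [mul_assoc, ← mul_assoc t, htx, htt]
  by_cases ha0 : aR = 0
  · left
    rw [Submodule.eq_bot_iff]
    intro z hz
    have hzt : (z : A) * t = (z : A) := by
      have := hF1 (z : A) z.2
      rw [Subtype.coe_eta, hpW z hz] at this
      exact this
    have hz0 : (z : A) = 0 := by
      have h5 : (z : A) * ((x : A) * t) = (z : A) := by
        rw [← mul_assoc, compMul_mul_w hww z.2, hzt]
      have h6 : ((aR : A)) = 0 := congrArg Subtype.val ha0
      rw [haA] at h6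
      rw [h6, mul_zero] at h5
      exact h5.symm
    exact Subtype.ext hz0
  by_cases hb0 : x - aR = 0
  · right
    have hxt : (x : A) * t = x := by
      have : aR = x := by rwa [sub_eq_zero, eq_comm] at hb0
      rw [← haA, this]
    rw [Submodule.eq_bot_iff]
    intro z hz
    have hzt : (z : A) * t = 0 := by
      have := hF1 (z : A) z.2
      rw [Subtype.coe_eta, hpW' z hz] at this
      simpa using this
    have : (z : A) = 0 := by
      have h5 : (z : A) * ((x : A) * t) = 0 := by
        rw [← mul_assoc, compMul_mul_w hww z.2, hzt]
      rw [hxt] at h5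
      rw [← compMul_mul_w hww z.2, h5]
    exact Subtype.ext this
  exfalso
  apply hx.2.2
  refine ⟨aR, x - aR, haa, ?_, ha0, hb0, ?_, ?_, by abel⟩
  · show (x - aR) * (x - aR) = x - aR
    rw [sub_mul, mul_sub, mul_sub, hx.1.eq, hxa, hax, haa]
    abel
  · show aR * (x - aR) = 0
    rw [mul_sub, hax, haa, sub_self]
  · show (x - aR) * aR = 0
    rw [sub_mul, hxa, haa, sub_self]

lemma morita_iso (hε : IsEpsilonFamily 𝒜 ε) (g : G) {m : ℕ} {c d : Fin m → A}
    (hc : ∀ k, c k ∈ 𝒜.comp g⁻¹) (hd : ∀ k, d k ∈ 𝒜.comp g)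
    (hs : ∑ k, c k * d k = ε g⁻¹) (x x' : ↥𝒜.base)
    (hxx : (x : A) * x = x) (hxx' : (x' : A) * x' = x')
    (Hx : ε g⁻¹ * (x : A) = x) (Hx' : ε g⁻¹ * (x' : A) = x')
    (φ : ↥(𝒜.compMul g (x : A)) ≃ₗ[↥𝒜.base] ↥(𝒜.compMul g (x' : A))) :
    Nonempty (↥(𝒜.compMul 1 (x : A)) ≃ₗ[↥𝒜.base] ↥(𝒜.compMul 1 (x' : A))) := by
  set tφ : A := ∑ k, c k * (φ.toLinearMap ⟨d k * (x : A), ⟨d k, hd k, rfl⟩⟩ : A) with htφ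
  set tψ : A := ∑ k, c k * (φ.symm.toLinearMap ⟨d k * (x' : A), ⟨d k, hd k, rfl⟩⟩ : A) with htψ
  have hmemφ : ∀ z : A, z ∈ 𝒜.compMul 1 (x : A) → z * tφ ∈ 𝒜.compMul 1 (x' : A) := by
    intro z hz
    rw [htφ, Finset.mul_sum]
    refine sum_mem fun k _ => ?_
    obtain ⟨a, ha, hq⟩ := (φ.toLinearMap ⟨d k * (x : A), ⟨d k, hd k, rfl⟩⟩).2
    rw [hq, ← mul_assoc, ← mul_assoc]
    have hzc : z * c k ∈ 𝒜.comp g⁻¹ := by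
      simpa using 𝒜.mul_mem (compMul_sub_comp x.2 hz) (hc k)
    exact ⟨z * c k * a, by simpa using 𝒜.mul_mem hzc ha, rfl⟩
  have hmemψ : ∀ z : A, z ∈ 𝒜.compMul 1 (x' : A) → z * tψ ∈ 𝒜.compMul 1 (x : A) := by
    intro z hz
    rw [htψ, Finset.mul_sum]
    refine sum_mem fun k _ => ?_
    obtain ⟨a, ha, hq⟩ := (φ.symm.toLinearMap ⟨d k * (x' : A), ⟨d k, hd k, rfl⟩⟩).2
    rw [hq, ← mul_assoc, ← mul_assoc]
    have hzc : z * c k ∈ 𝒜.comp g⁻¹ := by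
      simpa using 𝒜.mul_mem (compMul_sub_comp x'.2 hz) (hc k)
    exact ⟨z * c k * a, by simpa using 𝒜.mul_mem hzc ha, rfl⟩
  -- composite identities
  have hφψ : tφ * tψ = (x : A) := by
    conv_lhs => rw [htφ, Finset.sum_mul]
    have h1 : ∀ k : Fin m, (c k * (φ.toLinearMap ⟨d k * (x : A), ⟨d k, hd k, rfl⟩⟩ : A)) * tψ
        = c k * (d k * (x : A)) := by
      intro k
      rw [mul_assoc]
      have h2 := tmap_spec hε g hc hd hs x'.2 hxx' φ.symm.toLinearMap
        (φ.toLinearMap ⟨d k * (x : A), ⟨d k, hd k, rfl⟩⟩).2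
      rw [Subtype.coe_eta] at h2
      rw [← htψ] at h2
      rw [h2]
      congr 1
      have : φ.symm (φ ⟨d k * (x : A), ⟨d k, hd k, rfl⟩⟩) = ⟨d k * (x : A), ⟨d k, hd k, rfl⟩⟩ :=
        φ.symm_apply_apply _
      exact congrArg Subtype.val this
    rw [Finset.sum_congr rfl fun k _ => h1 k]
    have h3 : ∀ k : Fin m, c k * (d k * (x : A)) = (c k * d k) * x := fun k =>
      (mul_assoc _ _ _).symm
    rw [Finset.sum_congr rfl fun k _ => h3 k, ← Finset.sum_mul, hs, Hx]
  have hψφ : tψ * tφ = (x' : A) := by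
    conv_lhs => rw [htψ, Finset.sum_mul]
    have h1 : ∀ k : Fin m, (c k * (φ.symm.toLinearMap ⟨d k * (x' : A), ⟨d k, hd k, rfl⟩⟩ : A)) * tφ
        = c k * (d k * (x' : A)) := by
      intro k
      rw [mul_assoc]
      have h2 := tmap_spec hε g hc hd hs x.2 hxx φ.toLinearMap
        (φ.symm.toLinearMap ⟨d k * (x' : A), ⟨d k, hd k, rfl⟩⟩).2
      rw [Subtype.coe_eta] at h2
      rw [← htφ] at h2
      rw [h2]
      congr 1
      have : φ (φ.symm ⟨d k * (x' : A), ⟨d k, hd k, rfl⟩⟩) = ⟨d k * (x' : A), ⟨d k, hd k, rfl⟩⟩ :=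
        φ.apply_symm_apply _
      exact congrArg Subtype.val this
    rw [Finset.sum_congr rfl fun k _ => h1 k]
    have h3 : ∀ k : Fin m, c k * (d k * (x' : A)) = (c k * d k) * x' := fun k =>
      (mul_assoc _ _ _).symm
    rw [Finset.sum_congr rfl fun k _ => h3 k, ← Finset.sum_mul, hs, Hx']
  let Φ : ↥(𝒜.compMul 1 (x : A)) →ₗ[↥𝒜.base] ↥(𝒜.compMul 1 (x' : A)) :=
    { toFun := fun z => ⟨(z : A) * tφ, hmemφ _ z.2⟩
      map_add' := fun z z' => Subtype.ext (add_mul _ _ _)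
      map_smul' := fun r z => Subtype.ext (mul_assoc (r : A) (z : A) tφ) }
  let Ψ : ↥(𝒜.compMul 1 (x' : A)) →ₗ[↥𝒜.base] ↥(𝒜.compMul 1 (x : A)) :=
    { toFun := fun z => ⟨(z : A) * tψ, hmemψ _ z.2⟩
      map_add' := fun z z' => Subtype.ext (add_mul _ _ _)
      map_smul' := fun r z => Subtype.ext (mul_assoc (r : A) (z : A) tψ) }
  refine ⟨LinearEquiv.ofLinear Φ Ψ ?_ ?_⟩
  · ext z
    show ((z : A) * tψ) * tφ = (z : A)
    rw [mul_assoc, hψφ, compMul_mul_w hxx' z.2]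
  · ext z
    show ((z : A) * tφ) * tψ = (z : A)
    rw [mul_assoc, hφψ, compMul_mul_w hxx z.2]

lemma eps_fix_of_iso (hε : IsEpsilonFamily 𝒜 ε) (g : G) (x x' : ↥𝒜.base)
    (φ : ↥(𝒜.compMul g (x : A)) ≃ₗ[↥𝒜.base] ↥(𝒜.compMul 1 (x' : A))) :
    ε g * (x' : A) = x' := by
  set εR : ↥𝒜.base := ⟨ε g, eps_mem_one hε g⟩ with hεR
  have hact : ∀ z : ↥(𝒜.compMul g (x : A)), εR • z = z := fun z =>
    Subtype.ext (hε.mul_left g _ (compMul_sub_comp x.2 z.2))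
  set u : ↥(𝒜.compMul 1 (x' : A)) := ⟨(x' : A), ⟨1, 𝒜.one_mem, (one_mul _).symm⟩⟩ with hu
  have h1 : εR • u = u := by
    rw [← φ.apply_symm_apply u, ← map_smul, hact]
  have := congrArg Subtype.val h1
  exact this

end GEaux


namespace GEaux

lemma coe_ne_zero {A : Type*} [Ring A] {𝒜 : RingGrading G A} {x : ↥𝒜.base}
    (hx : x ≠ 0) : (x : A) ≠ 0 := fun h => hx (Subtype.ext h)

lemma main_lemma {G : Type*} [Group G] [DecidableEq G] {A : Type u} [Ring A]
    {𝒜 : RingGrading G A} {ε : G → A} (hε : IsEpsilonFamily 𝒜 ε)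
    (n : ℕ) (e : Fin n → ↥𝒜.base)
    (hprim : ∀ i : Fin n, IsPrimitiveIdempotent (e i))
    (hnoniso : ∀ i j : Fin n, i ≠ j →
      ¬Nonempty (↥(𝒜.compMul 1 (e i : A)) ≃ₗ[↥𝒜.base] ↥(𝒜.compMul 1 (e j : A))))
    (hcomplete : ∀ (M : Type u) [AddCommGroup M] [Module ↥𝒜.base M],
      Module.Finite ↥𝒜.base M → Module.Projective ↥𝒜.base M → Nontrivial M →
      (∀ W W' : Submodule ↥𝒜.base M, IsCompl W W' → W = ⊥ ∨ W' = ⊥) →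
      ∃ i : Fin n, Nonempty (M ≃ₗ[↥𝒜.base] ↥(𝒜.compMul 1 (e i : A))))
    (g : G) (H : ∀ i, ε g⁻¹ * (e i : A) = e i) :
    (∀ i, ∃ j, Nonempty (↥(𝒜.compMul g (e i : A)) ≃ₗ[↥𝒜.base] ↥(𝒜.compMul 1 (e j : A)))) ∧
    (∀ j, ε g * (e j : A) = e j) := by
  have hrep := hε.mem g⁻¹
  rw [inv_inv] at hrep
  obtain ⟨m, c, d, hc, hd, hs⟩ := sgMul_rep hrep
  have hkey : ∀ i, ∃ j, Nonempty
      (↥(𝒜.compMul g (e i : A)) ≃ₗ[↥𝒜.base] ↥(𝒜.compMul 1 (e j : A))) := by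
    intro i
    have hw : ((e i : A)) ∈ 𝒜.comp 1 := (e i).2
    have hww : ((e i : A)) * (e i : A) = e i := congrArg Subtype.val (hprim i).1
    exact hcomplete _ (compMul_finite hε g hc hd hs hw hww)
      (compMul_projective hε g hc hd hs hw hww)
      (compMul_nontrivial g hd hs (H i) (coe_ne_zero (hprim i).2.1))
      (fun W W' hWW => compMul_indec hε g hc hd hs (hprim i) W W' hWW)
  choose σ hσ using hkey
  have hfix : ∀ i, ε g * (e (σ i) : A) = e (σ i) := fun i =>
    eps_fix_of_iso hε g (e i) (e (σ i)) (hσ i).some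
  have hinj : Function.Injective σ := by
    intro i i' hii'
    by_contra hne
    have h2 := hσ i'
    rw [← hii'] at h2
    have φ : ↥(𝒜.compMul g (e i : A)) ≃ₗ[↥𝒜.base] ↥(𝒜.compMul g (e i' : A)) :=
      (hσ i).some.trans h2.some.symm
    exact hnoniso i i' hne (morita_iso hε g hc hd hs (e i) (e i')
      (congrArg Subtype.val (hprim i).1) (congrArg Subtype.val (hprim i').1)
      (H i) (H i') φ)
  refine ⟨fun i => ⟨σ i, hσ i⟩, fun j => ?_⟩
  obtain ⟨i, rfl⟩ := Finite.injective_iff_surjective.mp hinj j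
  exact hfix i

end GEaux


/-- Let `A` be epsilon-strongly `G`-graded, `R = A₁`, and
`E = {e₁, …, eₙ}` pairwise orthogonal primitive idempotents of `R` with
`Re_i ≇ Re_j` for `i ≠ j` and such that every nonzero indecomposable finitely
generated projective left `R`-module is isomorphic to some `Re_i`.  Then
`G_E = {g : ∀ i, ∃ j, A_g e_i ≅ Re_j} = {g : ∀ i, ε_g e_i = e_i}
     = {g : ∀ i, ε_g e_i ≠ 0}`. -/
theorem GE_descriptions {G : Type*} [Group G] [DecidableEq G] {A : Type u} [Ring A]
    (𝒜 : RingGrading G A) (ε : G → A) (hε : IsEpsilonFamily 𝒜 ε)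
    (n : ℕ) (e : Fin n → ↥𝒜.base)
    (horth : ∀ i j : Fin n, i ≠ j → e i * e j = 0)
    (hprim : ∀ i : Fin n, IsPrimitiveIdempotent (e i))
    (hnoniso : ∀ i j : Fin n, i ≠ j →
      ¬Nonempty (↥(𝒜.compMul 1 (e i : A)) ≃ₗ[↥𝒜.base] ↥(𝒜.compMul 1 (e j : A))))
    (hcomplete : ∀ (M : Type u) [AddCommGroup M] [Module ↥𝒜.base M],
      Module.Finite ↥𝒜.base M → Module.Projective ↥𝒜.base M → Nontrivial M →
      (∀ W W' : Submodule ↥𝒜.base M, IsCompl W W' → W = ⊥ ∨ W' = ⊥) →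
      ∃ i : Fin n, Nonempty (M ≃ₗ[↥𝒜.base] ↥(𝒜.compMul 1 (e i : A)))) :
    {g : G | ∀ i : Fin n, ∃ j : Fin n,
        Nonempty (↥(𝒜.compMul g (e i : A)) ≃ₗ[↥𝒜.base] ↥(𝒜.compMul 1 (e j : A)))} =
      {g : G | ∀ i : Fin n, ε g * (e i : A) = (e i : A)} ∧
    {g : G | ∀ i : Fin n, ε g * (e i : A) = (e i : A)} =
      {g : G | ∀ i : Fin n, ε g * (e i : A) ≠ 0} := by
  
  constructor
  · ext g
    simp only [Set.mem_setOf_eq]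
    constructor
    · intro h
      have H : ∀ i, ε g⁻¹ * (e i : A) = e i := by
        intro i
        rcases GEaux.eps_dichotomy hε g⁻¹ (hprim i) with h1 | h1
        · exact h1
        exfalso
        obtain ⟨j, ⟨φ⟩⟩ := h i
        have hnt : Nontrivial ↥(𝒜.compMul 1 (e j : A)) := by
          refine ⟨⟨(e j : A), ⟨1, 𝒜.one_mem, (one_mul _).symm⟩⟩, 0, ?_⟩
          simp only [ne_eq, Subtype.ext_iff, ZeroMemClass.coe_zero]
          exact GEaux.coe_ne_zero (hprim j).2.1
        have hnt' : Nontrivial ↥(𝒜.compMul g (e i : A)) := φ.toEquiv.nontrivial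
        obtain ⟨z, z', hzz⟩ := hnt'
        have hex : ∃ y : ↥(𝒜.compMul g (e i : A)), (y : A) ≠ 0 := by
          by_contra hcon
          push_neg at hcon
          exact hzz (Subtype.ext (by rw [hcon z, hcon z']))
        obtain ⟨y, hy0⟩ := hex
        obtain ⟨a, ha, hay⟩ := y.2
        apply hy0
        rw [hay, ← hε.mul_right g a ha, mul_assoc, h1, mul_zero]
      exact (GEaux.main_lemma hε n e hprim hnoniso hcomplete g H).2
    · intro h
      have H' : ∀ i, ε g⁻¹⁻¹ * (e i : A) = e i := by
        intro i
        rw [inv_inv]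
        exact h i
      have H : ∀ j, ε g⁻¹ * (e j : A) = e j :=
        (GEaux.main_lemma hε n e hprim hnoniso hcomplete g⁻¹ H').2
      exact (GEaux.main_lemma hε n e hprim hnoniso hcomplete g H).1
  · ext g
    simp only [Set.mem_setOf_eq]
    constructor
    · intro h i
      rw [h i]
      exact GEaux.coe_ne_zero (hprim i).2.1
    · intro h i
      rcases GEaux.eps_dichotomy hε g (hprim i) with h1 | h1
      · exact h1
      · exact absurd h1 (h i)
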